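/- Let R be a commutative ring, Γ a group, V an R[Γ]-module which is torsion-free as a ℤ-module, and Σ ⊆ Γ a subgroup of finite index. Then for every q ≥ 0 the natural restriction map on graded higher order invariants, H⁰_q(Γ,V)/H⁰_{q-1}(Γ,V) → H⁰_q(Σ,V)/H⁰_{q-1}(Σ,V), is injective. -/

import Mathlib

/-!
If `Σ` has finite index, its normal core gives `N ≠ 0` with `γ^N ∈ Σ` for every `γ ∈ Γ`.
Since `γ^N - 1 ≡ N (γ - 1)` modulo `I_Γ^2`, we get `N • I_Γ ⊆ I_Σ + I_Γ^2`, and multiplying out,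
`N^q • I_Γ^q ⊆ I_Σ^q + I_Γ^(q+1)`. So if `I_Γ^(q+1) v = 0` and `I_Σ^q v = 0`, then
`N^q • I_Γ^q v = 0`, and torsion-freeness of `V` gives `I_Γ^q v = 0`.
-/

open MonoidAlgebra

/-- The augmentation ideal of `R[Σ]` for a subgroup `Σ ≤ Γ`, viewed inside the
group algebra `R[Γ]`: the `R`-span of the elements `σ - 1`, `σ ∈ Σ`. -/
noncomputable def augIdealS (R : Type*) {Γ : Type*} [CommRing R] [Group Γ]
    (S : Subgroup Γ) : Submodule R (MonoidAlgebra R Γ) :=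
  Submodule.span R {x | ∃ σ ∈ S, x = MonoidAlgebra.of R Γ σ - 1}

/-- The invariants of order `q` for the subgroup `Σ`:
`H⁰_q(Σ,V) = {v ∈ V : I_Σ^{q+1} v = 0}`. -/
noncomputable def ordInvS (R : Type*) {Γ : Type*} [CommRing R] [Group Γ]
    (S : Subgroup Γ) (V : Type*) [AddCommGroup V] [Module (MonoidAlgebra R Γ) V]
    [Module R V] [SMulCommClass (MonoidAlgebra R Γ) R V] (q : ℕ) :
    Submodule R V where
  carrier := {v | ∀ x ∈ (augIdealS R S) ^ (q + 1), x • v = 0}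
  add_mem' := fun {a b} ha hb x hx => by rw [smul_add, ha x hx, hb x hx, add_zero]
  zero_mem' := fun x _ => smul_zero x
  smul_mem' := fun r v hv x hx => by rw [smul_comm, hv x hx, smul_zero]

section GroupAlgebra

variable {R Γ : Type*} [CommRing R] [Group Γ]

lemma of_sub_one_mem_augIdealS {S : Subgroup Γ} {γ : Γ} (hγ : γ ∈ S) :
    MonoidAlgebra.of R Γ γ - 1 ∈ augIdealS R S :=
  Submodule.subset_span ⟨γ, hγ, rfl⟩

lemma augIdealS_mono {S T : Subgroup Γ} (h : S ≤ T) : augIdealS R S ≤ augIdealS R T :=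
  Submodule.span_mono fun _ ⟨σ, hσ, hx⟩ => ⟨σ, h hσ, hx⟩

/-- `γ^N - 1 - N (γ - 1) = ∑_{i<N} (γ^i - 1)(γ - 1)`, from the geometric sum. -/
lemma of_pow_sub_one_sub_nsmul_mem_augIdealS_sq {S : Subgroup Γ} {γ : Γ} (hγ : γ ∈ S)
    (N : ℕ) :
    MonoidAlgebra.of R Γ (γ ^ N) - 1 - N • (MonoidAlgebra.of R Γ γ - 1) ∈ augIdealS R S ^ 2 := by
  have hsum : MonoidAlgebra.of R Γ (γ ^ N) - 1 - N • (MonoidAlgebra.of R Γ γ - 1) =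
      ∑ i ∈ Finset.range N, (MonoidAlgebra.of R Γ (γ ^ i) - 1) * (MonoidAlgebra.of R Γ γ - 1) := by
    simp only [map_pow, sub_mul, one_mul, Finset.sum_sub_distrib, ← Finset.sum_mul,
      geom_sum_mul, Finset.sum_const, Finset.card_range, smul_sub]
  rw [hsum, sq]
  exact Submodule.sum_mem _ fun i _ =>
    Submodule.mul_mem_mul (of_sub_one_mem_augIdealS (S.pow_mem hγ i))
      (of_sub_one_mem_augIdealS hγ)

lemma augIdealS_mul_le (S : Subgroup Γ) : augIdealS R S * augIdealS R S ≤ augIdealS R S := by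
  rw [augIdealS, Submodule.span_mul_span, Submodule.span_le]
  rintro _ ⟨_, ⟨σ, hσ, rfl⟩, _, ⟨τ, hτ, rfl⟩, rfl⟩
  have h : (MonoidAlgebra.of R Γ σ - 1) * (MonoidAlgebra.of R Γ τ - 1) =
      (MonoidAlgebra.of R Γ (σ * τ) - 1) - (MonoidAlgebra.of R Γ σ - 1) -
        (MonoidAlgebra.of R Γ τ - 1) := by
    rw [map_mul]; noncomm_ring
  simp only [SetLike.mem_coe, h]
  exact sub_mem (sub_mem (of_sub_one_mem_augIdealS (S.mul_mem hσ hτ))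
    (of_sub_one_mem_augIdealS hσ)) (of_sub_one_mem_augIdealS hτ)

variable {S : Subgroup Γ} {N : ℕ}

lemma nsmul_mem_augIdealS_sup_sq (hN : ∀ γ : Γ, γ ^ N ∈ S) {b : MonoidAlgebra R Γ}
    (hb : b ∈ augIdealS R (⊤ : Subgroup Γ)) :
    N • b ∈ augIdealS R S ⊔ augIdealS R (⊤ : Subgroup Γ) ^ 2 := by
  induction hb using Submodule.span_induction with
  | mem x hx =>
    obtain ⟨γ, -, rfl⟩ := hx
    rw [← sub_sub_cancel (MonoidAlgebra.of R Γ (γ ^ N) - 1) (N • (MonoidAlgebra.of R Γ γ - 1))]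
    exact sub_mem (Submodule.mem_sup_left (of_sub_one_mem_augIdealS (hN γ))) <|
      Submodule.mem_sup_right <| of_pow_sub_one_sub_nsmul_mem_augIdealS_sq (Subgroup.mem_top γ) N
  | zero => simp
  | add x y _ _ hx hy => rw [smul_add]; exact add_mem hx hy
  | smul r x _ hx => rw [smul_comm]; exact Submodule.smul_mem _ r hx

lemma augIdealS_pow_sup_mul_sup_sq_le (q : ℕ) :
    (augIdealS R S ^ q ⊔ augIdealS R (⊤ : Subgroup Γ) ^ (q + 1)) *
        (augIdealS R S ⊔ augIdealS R (⊤ : Subgroup Γ) ^ 2) ≤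
      augIdealS R S ^ (q + 1) ⊔ augIdealS R (⊤ : Subgroup Γ) ^ (q + 2) := by
  have hS : augIdealS R S ≤ augIdealS R (⊤ : Subgroup Γ) := augIdealS_mono le_top
  have hI : augIdealS R (⊤ : Subgroup Γ) ^ 2 ≤ augIdealS R ⊤ :=
    (sq _).trans_le (augIdealS_mul_le ⊤)
  rw [Submodule.sup_mul, Submodule.mul_sup, Submodule.mul_sup]
  refine sup_le (sup_le (le_sup_of_le_left (pow_succ _ q).ge) (le_sup_of_le_right ?_))
    (sup_le (le_sup_of_le_right ?_) (le_sup_of_le_right ?_))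
  · exact (mul_le_mul' (pow_le_pow_left' hS q) le_rfl).trans (pow_add _ q 2).ge
  · exact (mul_le_mul' le_rfl hS).trans (pow_succ _ (q + 1)).ge
  · exact (mul_le_mul' le_rfl hI).trans (pow_succ _ (q + 1)).ge

lemma pow_nsmul_mem_augIdealS_pow_sup (hN : ∀ γ : Γ, γ ^ N ∈ S) (q : ℕ)
    {x : MonoidAlgebra R Γ} (hx : x ∈ augIdealS R (⊤ : Subgroup Γ) ^ q) :
    N ^ q • x ∈ augIdealS R S ^ q ⊔ augIdealS R (⊤ : Subgroup Γ) ^ (q + 1) := by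
  induction q generalizing x with
  | zero =>
    rw [pow_zero] at hx
    simpa using Submodule.mem_sup_left hx
  | succ q ih =>
    rw [pow_succ] at hx
    refine Submodule.mul_induction_on hx (fun a ha b hb => ?_) (fun s t hs ht => ?_)
    · rw [pow_succ N, ← smul_mul_smul_comm]
      exact augIdealS_pow_sup_mul_sup_sq_le q
        (Submodule.mul_mem_mul (ih ha) (nsmul_mem_augIdealS_sup_sq hN hb))
    · rw [smul_add]
      exact add_mem hs ht

end GroupAlgebra

/-- Let `V` be an `R[Γ]`-module which is torsion-free as a
`ℤ`-module and `Σ ≤ Γ` of finite index.  Then for every `q ≥ 0` the restriction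
map on graded higher order invariants
`H⁰_q(Γ,V)/H⁰_{q-1}(Γ,V) → H⁰_q(Σ,V)/H⁰_{q-1}(Σ,V)` is injective, i.e. any
`v ∈ H⁰_q(Γ,V)` lying in `H⁰_{q-1}(Σ,V)` already lies in `H⁰_{q-1}(Γ,V)`
(with `H⁰_{-1} = 0`). -/
theorem stmt5 (R Γ : Type*) [CommRing R] [Group Γ]
    (V : Type*) [AddCommGroup V] [Module (MonoidAlgebra R Γ) V]
    [Module R V] [SMulCommClass (MonoidAlgebra R Γ) R V]
    (htf : ∀ n : ℕ, n ≠ 0 → ∀ v : V, n • v = 0 → v = 0)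
    (S : Subgroup Γ) [S.FiniteIndex] (q : ℕ) :
    ∀ v ∈ ordInvS R (⊤ : Subgroup Γ) V q,
      v ∈ (if 1 ≤ q then ordInvS R S V (q - 1) else (⊥ : Submodule R V)) →
      v ∈ (if 1 ≤ q then ordInvS R (⊤ : Subgroup Γ) V (q - 1)
           else (⊥ : Submodule R V)) := by
  intro v hv hvS
  cases q with
  | zero => simpa using hvS
  | succ p =>
    simp only [le_add_iff_nonneg_left, zero_le, if_true, Nat.add_sub_cancel] at hvS ⊢
    set N := S.normalCore.index
    have hN : ∀ γ : Γ, γ ^ N ∈ S := fun γ => S.normalCore_le (S.normalCore.pow_index_mem γ)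
    intro x hx
    obtain ⟨y, hy, z, hz, hyz⟩ :=
      Submodule.mem_sup.mp (pow_nsmul_mem_augIdealS_pow_sup hN _ hx)
    have hNx : N ^ (p + 1) • (x • v) = 0 := by
      rw [← smul_assoc, ← hyz, add_smul, hvS y hy, hv z hz, add_zero]
    exact htf _ (pow_ne_zero _ Subgroup.FiniteIndex.index_ne_zero) _ hNx
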